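/- Let 𝓑 be a generalized Boolean algebra and 𝓐(𝓑) = closed span{χ_A : A ∈ 𝓑} ⊆ C₀(𝓑̂). The map 𝓙 ↦ K_𝓙 := closed span{χ_A : A ∈ 𝓙} is a bijection between the set of ideals of the Boolean algebra 𝓑 and the set of closed ideals of the C*-algebra 𝓐(𝓑), with inverse K ↦ 𝓙_K := {A ∈ 𝓑 : χ_A ∈ K}. -/

import Mathlib

open scoped ZeroAtInfty
open Filter Topology

/-- The character space 𝓑̂ of a generalized Boolean algebra 𝓑: the space of ultrafilters
of 𝓑, realized as the nonzero Boolean characters 𝓑 → Bool, with the topology of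
pointwise convergence. -/
abbrev BoolCharSpace (B : Type*) [GeneralizedBooleanAlgebra B] : Type _ :=
  {φ : B → Bool // (∀ a b, φ (a ⊓ b) = (φ a && φ b)) ∧ (∀ a b, φ (a ⊔ b) = (φ a || φ b)) ∧
    (∀ a b, φ (a \ b) = (φ a && !φ b)) ∧ φ ⊥ = false ∧ ∃ a, φ a = true}

variable {B : Type*} [GeneralizedBooleanAlgebra B]

theorem isCompact_cylinder (A : B) :
    IsCompact {φ : BoolCharSpace B | φ.1 A = true} := by
  rw [Subtype.isCompact_iff]
  set K : Set (B → Bool) :=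
    {φ | ((∀ a b, φ (a ⊓ b) = (φ a && φ b)) ∧ (∀ a b, φ (a ⊔ b) = (φ a || φ b)) ∧
      (∀ a b, φ (a \ b) = (φ a && !φ b)) ∧ φ ⊥ = false) ∧ φ A = true} with hK
  have himg : Subtype.val '' {φ : BoolCharSpace B | φ.1 A = true} = K := by
    ext φ
    constructor
    · rintro ⟨ψ, hψ, rfl⟩
      exact ⟨⟨ψ.2.1, ψ.2.2.1, ψ.2.2.2.1, ψ.2.2.2.2.1⟩, hψ⟩
    · rintro ⟨⟨h1, h2, h3, h4⟩, h5⟩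
      exact ⟨⟨φ, h1, h2, h3, h4, ⟨A, h5⟩⟩, h5, rfl⟩
  rw [himg]
  have c1 : IsClosed {φ : B → Bool | ∀ a b, φ (a ⊓ b) = (φ a && φ b)} := by
    have he : {φ : B → Bool | ∀ a b, φ (a ⊓ b) = (φ a && φ b)} =
        ⋂ (a : B), ⋂ (b : B), {φ : B → Bool | φ (a ⊓ b) = (φ a && φ b)} := by
      ext φ; simp
    rw [he]
    refine isClosed_iInter fun a => isClosed_iInter fun b => ?_
    have hcont : Continuous ((fun p : Bool × Bool => p.1 && p.2) ∘ fun φ : B → Bool => (φ a, φ b)) :=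
      Continuous.comp continuous_of_discreteTopology
        ((continuous_apply a).prodMk (continuous_apply b))
    exact isClosed_eq (continuous_apply _) hcont
  have c2 : IsClosed {φ : B → Bool | ∀ a b, φ (a ⊔ b) = (φ a || φ b)} := by
    have he : {φ : B → Bool | ∀ a b, φ (a ⊔ b) = (φ a || φ b)} =
        ⋂ (a : B), ⋂ (b : B), {φ : B → Bool | φ (a ⊔ b) = (φ a || φ b)} := by
      ext φ; simp
    rw [he]
    refine isClosed_iInter fun a => isClosed_iInter fun b => ?_
    have hcont : Continuous ((fun p : Bool × Bool => p.1 || p.2) ∘ fun φ : B → Bool => (φ a, φ b)) :=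
      Continuous.comp continuous_of_discreteTopology
        ((continuous_apply a).prodMk (continuous_apply b))
    exact isClosed_eq (continuous_apply _) hcont
  have c3 : IsClosed {φ : B → Bool | ∀ a b, φ (a \ b) = (φ a && !φ b)} := by
    have he : {φ : B → Bool | ∀ a b, φ (a \ b) = (φ a && !φ b)} =
        ⋂ (a : B), ⋂ (b : B), {φ : B → Bool | φ (a \ b) = (φ a && !φ b)} := by
      ext φ; simp
    rw [he]
    refine isClosed_iInter fun a => isClosed_iInter fun b => ?_
    have hcont : Continuous ((fun p : Bool × Bool => p.1 && !p.2) ∘ fun φ : B → Bool => (φ a, φ b)) :=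
      Continuous.comp continuous_of_discreteTopology
        ((continuous_apply a).prodMk (continuous_apply b))
    exact isClosed_eq (continuous_apply _) hcont
  have c4 : IsClosed {φ : B → Bool | φ ⊥ = false} :=
    isClosed_eq (continuous_apply _) continuous_const
  have c5 : IsClosed {φ : B → Bool | φ A = true} :=
    isClosed_eq (continuous_apply _) continuous_const
  have hKeq : K = ({φ : B → Bool | ∀ a b, φ (a ⊓ b) = (φ a && φ b)} ∩
      {φ | ∀ a b, φ (a ⊔ b) = (φ a || φ b)} ∩ {φ | ∀ a b, φ (a \ b) = (φ a && !φ b)} ∩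
      {φ | φ ⊥ = false}) ∩ {φ | φ A = true} := by
    ext φ
    simp only [hK, Set.mem_setOf_eq, Set.mem_inter_iff]
    tauto
  have hclosed : IsClosed K := by
    rw [hKeq]
    exact ((((c1.inter c2).inter c3).inter c4)).inter c5
  exact hclosed.isCompact

/-- χ_A = 1_{Z(A)} ∈ C₀(𝓑̂): the characteristic function of the compact open
cylinder set Z(A) = {φ ∈ 𝓑̂ : φ(A) = 1}. -/
noncomputable def chi (A : B) : C₀(BoolCharSpace B, ℂ) where
  toFun φ := if φ.1 A then 1 else 0
  continuous_toFun :=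
    (continuous_of_discreteTopology (f := fun t : Bool => if t then (1 : ℂ) else 0)).comp
      ((continuous_apply A).comp continuous_subtype_val)
  zero_at_infty' := by
    refine HasCompactSupport.is_zero_at_infty ?_
    refine HasCompactSupport.intro (isCompact_cylinder A) ?_
    intro φ hφ
    simp only [Set.mem_setOf_eq] at hφ
    simp [hφ]

/-- An ideal of a (generalized) Boolean algebra: a nonempty subset closed under
binary unions and under intersection with arbitrary elements. -/
def BoolIdeal {B : Type*} [GeneralizedBooleanAlgebra B] (I : Set B) : Prop :=
  I.Nonempty ∧ (∀ a ∈ I, ∀ b ∈ I, a ⊔ b ∈ I) ∧ (∀ a ∈ I, ∀ b : B, a ⊓ b ∈ I)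

/-- 𝓐(𝓑) = closed span{χ_A : A ∈ 𝓑} ⊆ C₀(𝓑̂). -/
noncomputable def boolAlgebraOfChars (B : Type*) [GeneralizedBooleanAlgebra B] :
    Set C₀(BoolCharSpace B, ℂ) :=
  closure (Submodule.span ℂ (Set.range (chi (B := B))) : Set C₀(BoolCharSpace B, ℂ))

/-- A closed ideal of the C*-algebra 𝓐(𝓑). -/
def IsClosedIdealOfA {B : Type*} [GeneralizedBooleanAlgebra B]
    (K : Set C₀(BoolCharSpace B, ℂ)) : Prop :=
  K ⊆ boolAlgebraOfChars B ∧ IsClosed K ∧ (0 : C₀(BoolCharSpace B, ℂ)) ∈ K ∧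
    (∀ f ∈ K, ∀ g ∈ K, f + g ∈ K) ∧ (∀ c : ℂ, ∀ f ∈ K, c • f ∈ K) ∧
    (∀ f ∈ K, ∀ g ∈ boolAlgebraOfChars B, f * g ∈ K ∧ g * f ∈ K)

/-!
An ideal `J` is recovered from `K_J` by prime-ideal separation: for `A ∉ J` a prime ideal
containing `J` and missing `A` gives a character `φ` with `φ A = 1` and `φ = 0` on `J`, so
evaluation at `φ` kills `K_J` but not `χ_A`.

Conversely, let `K` be a closed ideal and `f ∈ K`. Approximate `f` within `ε / 2` by
`g = ∑ cᵢ χ_{aᵢ}` with the `aᵢ` pairwise disjoint. If `|cᵢ| > ε / 2`, then `χ_{aᵢ} f ∈ K` is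
within `|cᵢ|` of `cᵢ χ_{aᵢ}`, and a Neumann-series argument puts `χ_{aᵢ}` into `K`; the other
terms have sup norm at most `ε / 2` by disjointness. So `f` lies in the closed span of the
`χ_A ∈ K`.
-/

noncomputable abbrev closedSpanChi (S : Set B) : Set C₀(BoolCharSpace B, ℂ) :=
  closure (Submodule.span ℂ (chi '' S) : Set C₀(BoolCharSpace B, ℂ))

lemma chi_apply (A : B) (φ : BoolCharSpace B) : chi A φ = if φ.1 A then 1 else 0 := rfl

@[simp]
lemma chi_bot : chi (⊥ : B) = 0 := by
  ext φ
  simp [chi_apply, φ.2.2.2.2.1]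

lemma chi_mul (a b : B) : chi a * chi b = chi (a ⊓ b) := by
  ext φ
  simp only [ZeroAtInftyContinuousMap.coe_mul, Pi.mul_apply, chi_apply, φ.2.1 a b]
  cases φ.1 a <;> cases φ.1 b <;> simp

lemma chi_sup (a b : B) : chi (a ⊔ b) = chi a + chi b - chi (a ⊓ b) := by
  ext φ
  simp only [ZeroAtInftyContinuousMap.coe_sub, ZeroAtInftyContinuousMap.coe_add, Pi.sub_apply,
    Pi.add_apply, chi_apply, φ.2.1 a b, φ.2.2.1 a b]
  cases φ.1 a <;> cases φ.1 b <;> simp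

lemma chi_sup_of_disjoint {a b : B} (h : Disjoint a b) : chi (a ⊔ b) = chi a + chi b := by
  rw [chi_sup, h.eq_bot, chi_bot, sub_zero]

lemma chi_eq_chi_inf_add_chi_sdiff (a b : B) : chi a = chi (a ⊓ b) + chi (a \ b) := by
  rw [← chi_sup_of_disjoint disjoint_inf_sdiff, sup_inf_sdiff]

lemma chi_finset_sup {ι : Type*} {s : Finset ι} {a : ι → B}
    (h : (s : Set ι).PairwiseDisjoint a) : chi (s.sup a) = ∑ i ∈ s, chi (a i) := by
  classical
  induction s using Finset.induction_on with
  | empty => simp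
  | insert i s hi ih =>
    rw [Finset.coe_insert, Set.pairwiseDisjoint_insert] at h
    rw [Finset.sup_insert, Finset.sum_insert hi, ← ih h.1,
      chi_sup_of_disjoint (Finset.disjoint_sup_right.2 fun j hj => h.2 j hj (by grind))]

lemma norm_chi_le (A : B) : ‖chi A‖ ≤ 1 := by
  rw [← ZeroAtInftyContinuousMap.norm_toBCF_eq_norm]
  refine (BoundedContinuousFunction.norm_le zero_le_one).2 fun φ => ?_
  change ‖chi A φ‖ ≤ 1
  rw [chi_apply]
  split <;> simp

lemma chi_mem_boolAlgebraOfChars (A : B) : chi A ∈ boolAlgebraOfChars B :=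
  subset_closure (Submodule.subset_span ⟨A, rfl⟩)

lemma boolAlgebraOfChars_eq_closedSpanChi_univ : boolAlgebraOfChars B = closedSpanChi Set.univ := by
  rw [boolAlgebraOfChars, closedSpanChi, Set.image_univ]

lemma boolAlgebraOfChars_eq_topologicalClosure :
    boolAlgebraOfChars B = ((Submodule.span ℂ (Set.range (chi (B := B)))).topologicalClosure :
      Set C₀(BoolCharSpace B, ℂ)) :=
  (Submodule.topologicalClosure_coe _).symm

lemma map_sdiff_of_map_inf_sup_bot {φ : B → Bool} (hinf : ∀ a b, φ (a ⊓ b) = (φ a && φ b))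
    (hsup : ∀ a b, φ (a ⊔ b) = (φ a || φ b)) (hbot : φ ⊥ = false) (a b : B) :
    φ (a \ b) = (φ a && !φ b) := by
  have hcover := hsup (a ⊓ b) (a \ b)
  have hdisj := hinf (a \ b) b
  rw [sup_inf_sdiff, hinf] at hcover
  rw [inf_sdiff_self_left, hbot] at hdisj
  revert hcover hdisj
  cases φ (a \ b) <;> cases φ a <;> cases φ b <;> simp

lemma BoolCharSpace.apply_eq_false_of_disjoint (φ : BoolCharSpace B) {a b : B}
    (hab : Disjoint a b) (ha : φ.1 a = true) : φ.1 b = false := by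
  have h := φ.2.1 a b
  rw [hab.eq_bot, φ.2.2.2.2.1, ha] at h
  simpa using h.symm

lemma Order.Ideal.IsPrime.inf_mem_iff {I : Order.Ideal B} (hI : I.IsPrime) {a b : B} :
    a ⊓ b ∈ I ↔ a ∈ I ∨ b ∈ I :=
  ⟨hI.mem_or_mem, fun h => h.elim (I.lower inf_le_left) (I.lower inf_le_right)⟩

lemma Order.Ideal.IsPrime.exists_boolChar {I : Order.Ideal B} (hI : I.IsPrime) {A : B}
    (hA : A ∉ I) : ∃ φ : BoolCharSpace B, φ.1 A = true ∧ ∀ b ∈ I, φ.1 b = false := by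
  classical
  have hinf (a b : B) : decide (a ⊓ b ∉ I) = (decide (a ∉ I) && decide (b ∉ I)) := by
    simp [hI.inf_mem_iff, not_or]
  have hsup (a b : B) : decide (a ⊔ b ∉ I) = (decide (a ∉ I) || decide (b ∉ I)) := by
    simp [Order.Ideal.sup_mem_iff]
  have hbot : decide ((⊥ : B) ∉ I) = false := by simp [Order.Ideal.bot_mem]
  exact ⟨⟨fun x => decide (x ∉ I), hinf, hsup,
    map_sdiff_of_map_inf_sup_bot (φ := fun x => decide (x ∉ I)) hinf hsup hbot, hbot, A,
    by simpa using hA⟩, by simpa using hA, fun b hb => by simpa using hb⟩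

def BoolIdeal.toIdeal {J : Set B} (hJ : BoolIdeal J) : Order.Ideal B where
  carrier := J
  lower' a b hba ha := inf_eq_right.2 hba ▸ hJ.2.2 a ha b
  nonempty' := hJ.1
  directed' a ha b hb := ⟨a ⊔ b, hJ.2.1 a ha b hb, le_sup_left, le_sup_right⟩

lemma BoolIdeal.exists_boolChar {J : Set B} (hJ : BoolIdeal J) {A : B} (hA : A ∉ J) :
    ∃ φ : BoolCharSpace B, φ.1 A = true ∧ ∀ b ∈ J, φ.1 b = false := by
  have hdisj : Disjoint (Order.PFilter.principal A : Set B) (hJ.toIdeal : Set B) :=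
    Set.disjoint_left.2 fun b hAb hb =>
      hA (hJ.toIdeal.lower (Order.PFilter.mem_principal.1 hAb) hb)
  obtain ⟨I, hI, hJI, hAI⟩ := DistribLattice.prime_ideal_of_disjoint_filter_ideal hdisj
  obtain ⟨φ, hφA, hφI⟩ := hI.exists_boolChar
    (Set.disjoint_left.1 hAI (Order.PFilter.mem_principal.2 le_rfl))
  exact ⟨φ, hφA, fun b hb => hφI b (hJI hb)⟩

lemma apply_eq_zero_of_mem_closedSpanChi {S : Set B} {φ : BoolCharSpace B}
    (hφ : ∀ b ∈ S, φ.1 b = false) {f : C₀(BoolCharSpace B, ℂ)} (hf : f ∈ closedSpanChi S) :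
    f φ = 0 := by
  have heval : Continuous fun f : C₀(BoolCharSpace B, ℂ) => f.toBCF φ :=
    (continuous_eval_const φ).comp ZeroAtInftyContinuousMap.isometry_toBCF.continuous
  refine closure_minimal (fun g hg => ?_) (isClosed_eq heval continuous_const) hf
  induction hg using Submodule.span_induction with
  | mem _ h =>
    obtain ⟨b, hb, rfl⟩ := h
    simp [chi_apply, hφ b hb]
  | zero => rfl
  | add _ _ _ _ h₁ h₂ => simp_all
  | smul _ _ _ h => simp_all

lemma BoolIdeal.mem_of_chi_mem_closedSpanChi {J : Set B} (hJ : BoolIdeal J) {A : B}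
    (hA : chi A ∈ closedSpanChi J) : A ∈ J := by
  by_contra hAJ
  obtain ⟨φ, hφA, hφJ⟩ := hJ.exists_boolChar hAJ
  simpa [chi_apply, hφA] using apply_eq_zero_of_mem_closedSpanChi hφJ hA

lemma mul_mem_span_chi {S T U : Set B} (h : ∀ a ∈ S, ∀ b ∈ T, a ⊓ b ∈ U)
    {f g : C₀(BoolCharSpace B, ℂ)} (hf : f ∈ Submodule.span ℂ (chi '' S))
    (hg : g ∈ Submodule.span ℂ (chi '' T)) : f * g ∈ Submodule.span ℂ (chi '' U) := by
  have hfg := Submodule.apply_mem_map₂ (LinearMap.mul ℂ C₀(BoolCharSpace B, ℂ)) hf hg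
  rw [Submodule.map₂_span_span] at hfg
  refine Submodule.span_mono ?_ hfg
  rintro _ ⟨_, ⟨a, ha, rfl⟩, _, ⟨b, hb, rfl⟩, rfl⟩
  exact ⟨a ⊓ b, h a ha b hb, (chi_mul a b).symm⟩

lemma mul_mem_closedSpanChi {S T U : Set B} (h : ∀ a ∈ S, ∀ b ∈ T, a ⊓ b ∈ U)
    {f g : C₀(BoolCharSpace B, ℂ)} (hf : f ∈ closedSpanChi S) (hg : g ∈ closedSpanChi T) :
    f * g ∈ closedSpanChi U :=
  map_mem_closure₂ continuous_mul hf hg fun _ hf' _ hg' => mul_mem_span_chi h hf' hg'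

lemma BoolIdeal.isClosedIdealOfA_closedSpanChi {J : Set B} (hJ : BoolIdeal J) :
    IsClosedIdealOfA (closedSpanChi J) := by
  rw [closedSpanChi, ← Submodule.topologicalClosure_coe]
  refine ⟨?_, Submodule.isClosed_topologicalClosure _, zero_mem _, fun _ hf _ hg => add_mem hf hg,
    fun c _ hf => Submodule.smul_mem _ c hf, fun f hf g hg => ?_⟩
  · rw [boolAlgebraOfChars_eq_topologicalClosure]
    exact Submodule.topologicalClosure_mono (Submodule.span_mono (Set.image_subset_range chi J))
  · rw [boolAlgebraOfChars_eq_closedSpanChi_univ] at hg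
    rw [Submodule.topologicalClosure_coe] at hf ⊢
    have hfg := mul_mem_closedSpanChi (fun a ha b _ => hJ.2.2 a ha b) hf hg
    exact ⟨hfg, mul_comm f g ▸ hfg⟩

lemma BoolIdeal.setOf_chi_mem_closedSpanChi {J : Set B} (hJ : BoolIdeal J) :
    {A : B | chi A ∈ closedSpanChi J} = J :=
  subset_antisymm (fun _ => hJ.mem_of_chi_mem_closedSpanChi)
    fun A hA => subset_closure (Submodule.subset_span ⟨A, hA, rfl⟩)

lemma ZeroAtInftyContinuousMap.sum_apply {X ι β : Type*} [TopologicalSpace X]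
    [TopologicalSpace β] [AddCommMonoid β] [ContinuousAdd β] (s : Finset ι)
    (f : ι → C₀(X, β)) (x : X) : (∑ i ∈ s, f i) x = ∑ i ∈ s, f i x :=
  map_sum (⟨⟨fun f : C₀(X, β) => f x, rfl⟩, fun _ _ => rfl⟩ : C₀(X, β) →+ β) f s

lemma chi_mul_sum_smul_chi {ι : Type*} [Fintype ι] {a : ι → B}
    (ha : Pairwise fun i j => Disjoint (a i) (a j)) (c : ι → ℂ) (j : ι) :
    chi (a j) * ∑ i, c i • chi (a i) = c j • chi (a j) := by
  rw [Finset.mul_sum, Finset.sum_eq_single j]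
  · rw [mul_smul_comm, chi_mul, inf_idem]
  · intro i _ hij
    rw [mul_smul_comm, chi_mul, (ha hij.symm).eq_bot, chi_bot, smul_zero]
  · simp

lemma norm_sum_smul_chi_le {ι : Type*} {s : Finset ι} {a : ι → B}
    (ha : Pairwise fun i j => Disjoint (a i) (a j)) {c : ι → ℂ} {δ : ℝ} (hδ : 0 ≤ δ)
    (hc : ∀ i ∈ s, ‖c i‖ ≤ δ) : ‖∑ i ∈ s, c i • chi (a i)‖ ≤ δ := by
  rw [← ZeroAtInftyContinuousMap.norm_toBCF_eq_norm]
  refine (BoundedContinuousFunction.norm_le hδ).2 fun φ => ?_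
  change ‖(∑ i ∈ s, c i • chi (a i)) φ‖ ≤ δ
  simp only [ZeroAtInftyContinuousMap.sum_apply, ZeroAtInftyContinuousMap.coe_smul,
    Pi.smul_apply, chi_apply, smul_eq_mul]
  by_cases h : ∃ j ∈ s, φ.1 (a j) = true
  · obtain ⟨j, hj, hφj⟩ := h
    have hφ (i : ι) (hij : i ≠ j) : φ.1 (a i) = false :=
      φ.apply_eq_false_of_disjoint (ha hij.symm) hφj
    rw [Finset.sum_eq_single j (fun i _ hij => by simp [hφ i hij]) (absurd hj)]
    simpa [hφj] using hc j hj
  · push Not at h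
    rw [Finset.sum_eq_zero fun i hi => by simp [h i hi]]
    simpa using hδ

def IsDisjointChiSum (g : C₀(BoolCharSpace B, ℂ)) : Prop :=
  ∃ (ι : Type) (_ : Fintype ι) (c : ι → ℂ) (a : ι → B),
    Pairwise (fun i j => Disjoint (a i) (a j)) ∧ g = ∑ i, c i • chi (a i)

lemma isDisjointChiSum_zero : IsDisjointChiSum (0 : C₀(BoolCharSpace B, ℂ)) :=
  ⟨Empty, inferInstance, Empty.elim, Empty.elim, fun i => i.elim, by simp⟩

lemma IsDisjointChiSum.add_smul_chi {g : C₀(BoolCharSpace B, ℂ)} (hg : IsDisjointChiSum g)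
    (c₀ : ℂ) (A : B) : IsDisjointChiSum (g + c₀ • chi A) := by
  obtain ⟨ι, _, c, a, ha, rfl⟩ := hg
  set s := Finset.univ.sup a
  -- `a i` is cut into `a i ⊓ A` and `a i \ A`; the new piece `A \ s` is the rest of `A`
  let piece (p : ι × Bool) : B := if p.2 then a p.1 ⊓ A else a p.1 \ A
  have piece_le (p : ι × Bool) : piece p ≤ a p.1 := by
    unfold piece
    split
    exacts [inf_le_left, sdiff_le]
  refine ⟨Option (ι × Bool), inferInstance,
    fun o => o.elim c₀ fun p => if p.2 then c p.1 + c₀ else c p.1,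
    fun o => o.elim (A \ s) piece, ?_, ?_⟩
  · have hnew (p : ι × Bool) : Disjoint (A \ s) (piece p) :=
      disjoint_sdiff_self_left.mono_right ((piece_le p).trans (Finset.le_sup (Finset.mem_univ _)))
    rintro (_ | ⟨i, b⟩) (_ | ⟨j, b'⟩) hne
    · exact absurd rfl hne
    · exact hnew (j, b')
    · exact (hnew (i, b)).symm
    · by_cases hij : i = j
      · subst hij
        cases b <;> cases b' <;> simp_all [piece, disjoint_inf_sdiff, disjoint_inf_sdiff.symm]
      · exact (ha hij).mono (piece_le (i, b)) (piece_le (j, b'))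
  · have hcover : chi (A ⊓ s) = ∑ i, chi (a i ⊓ A) := by
      rw [Finset.sup_inf_distrib_left, chi_finset_sup]
      · simp_rw [inf_comm A]
      · exact fun i _ j _ hij => (ha hij).mono inf_le_right inf_le_right
    have hsplit (i : ι) : c i • chi (a i) + c₀ • chi (a i ⊓ A) =
        (c i + c₀) • chi (a i ⊓ A) + c i • chi (a i \ A) := by
      rw [chi_eq_chi_inf_add_chi_sdiff (a i) A]
      module
    simp only [Fintype.sum_option, Fintype.sum_prod_type, Fintype.sum_bool, Option.elim, piece,
      if_true, if_false, Bool.false_eq_true, ← hsplit]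
    rw [chi_eq_chi_inf_add_chi_sdiff A s, hcover, Finset.sum_add_distrib, ← Finset.smul_sum]
    module

lemma isDisjointChiSum_of_mem_span {g : C₀(BoolCharSpace B, ℂ)}
    (hg : g ∈ Submodule.span ℂ (Set.range (chi (B := B)))) : IsDisjointChiSum g := by
  suffices ∀ h, IsDisjointChiSum h → IsDisjointChiSum (h + g) by
    simpa using this 0 isDisjointChiSum_zero
  induction hg using Submodule.closure_induction with
  | zero => simp
  | add x y _ _ hx hy => exact fun h hh => add_assoc h x y ▸ hy _ (hx h hh)
  | smul_mem c _ hA =>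
    obtain ⟨A, rfl⟩ := hA
    exact fun h hh => hh.add_smul_chi c A

def IsClosedIdealOfA.toSubmodule {K : Set C₀(BoolCharSpace B, ℂ)} (hK : IsClosedIdealOfA K) :
    Submodule ℂ C₀(BoolCharSpace B, ℂ) where
  carrier := K
  add_mem' hf hg := hK.2.2.2.1 _ hf _ hg
  zero_mem' := hK.2.2.1
  smul_mem' c _ hf := hK.2.2.2.2.1 c _ hf

-- `e` is the limit of `e - dⁿ e`, which lies in `K` as `e - dⁿ⁺¹ e = (e - d) + d (e - dⁿ e)`.
lemma IsClosedIdealOfA.mem_of_sub_mem_of_norm_lt_one {K : Set C₀(BoolCharSpace B, ℂ)}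
    (hK : IsClosedIdealOfA K) {d e : C₀(BoolCharSpace B, ℂ)} (hd : d ∈ boolAlgebraOfChars B)
    (hde : d * e = d) (hed : e - d ∈ K) (hnorm : ‖d‖ < 1) : e ∈ K := by
  set p : ℕ → C₀(BoolCharSpace B, ℂ) := fun n => (d * ·)^[n] e
  have hp_succ (n : ℕ) : p (n + 1) = d * p n := Function.iterate_succ_apply' _ n e
  have hmem (n : ℕ) : e - p n ∈ K := by
    induction n with
    | zero => simpa [p] using hK.2.2.1
    | succ n ih =>
      rw [show e - p (n + 1) = (e - d) + d * (e - p n) by rw [hp_succ, mul_sub, hde]; abel]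
      exact hK.toSubmodule.add_mem hed (hK.2.2.2.2.2 _ ih d hd).2
  have hp_norm (n : ℕ) : ‖p n‖ ≤ ‖d‖ ^ n * ‖e‖ := by
    induction n with
    | zero => simp [p]
    | succ n ih =>
      calc ‖p (n + 1)‖ ≤ ‖d‖ * ‖p n‖ := hp_succ n ▸ norm_mul_le d (p n)
        _ ≤ ‖d‖ * (‖d‖ ^ n * ‖e‖) := by gcongr
        _ = ‖d‖ ^ (n + 1) * ‖e‖ := by ring
  have hp_lim : Tendsto p atTop (𝓝 0) := by
    refine squeeze_zero_norm hp_norm ?_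
    simpa using (tendsto_pow_atTop_nhds_zero_of_lt_one (norm_nonneg d) hnorm).mul_const ‖e‖
  simpa using hK.2.1.mem_of_tendsto (tendsto_const_nhds.sub hp_lim) (Eventually.of_forall hmem)

lemma IsClosedIdealOfA.chi_mem_of_norm_sub_lt {K : Set C₀(BoolCharSpace B, ℂ)}
    (hK : IsClosedIdealOfA K) {f g : C₀(BoolCharSpace B, ℂ)} (hf : f ∈ K) {c : ℂ} {x : B}
    (hg : chi x * g = c • chi x) (hfg : ‖f - g‖ < ‖c‖) : chi x ∈ K := by
  have hc : c ≠ 0 := norm_pos_iff.1 ((norm_nonneg _).trans_lt hfg)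
  set e := chi x
  have hee : e * e = e := by rw [chi_mul, inf_idem]
  have hef : e * f ∈ K := (hK.2.2.2.2.2 f hf e (chi_mem_boolAlgebraOfChars x)).2
  refine hK.mem_of_sub_mem_of_norm_lt_one (d := e - c⁻¹ • (e * f)) ?_ ?_ ?_ ?_
  · have he := chi_mem_boolAlgebraOfChars x
    have hefA := hK.1 hef
    rw [boolAlgebraOfChars_eq_topologicalClosure] at he hefA ⊢
    exact Submodule.sub_mem _ he (Submodule.smul_mem _ _ hefA)
  · rw [sub_mul, smul_mul_assoc, mul_right_comm, hee]
  · rw [sub_sub_cancel]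
    exact hK.toSubmodule.smul_mem _ hef
  · have hd : e - c⁻¹ • (e * f) = c⁻¹ • (e * (g - f)) := by
      rw [mul_sub, hg]
      nth_rw 1 [← inv_smul_smul₀ hc e]
      module
    have hefg : ‖e * (g - f)‖ ≤ ‖f - g‖ :=
      calc ‖e * (g - f)‖ ≤ ‖e‖ * ‖g - f‖ := norm_mul_le _ _
        _ ≤ 1 * ‖f - g‖ := by rw [norm_sub_rev]; gcongr; exact norm_chi_le x
        _ = ‖f - g‖ := one_mul _
    calc ‖e - c⁻¹ • (e * f)‖ = ‖c‖⁻¹ * ‖e * (g - f)‖ := by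
          rw [hd, norm_smul, norm_inv]
      _ ≤ ‖c‖⁻¹ * ‖f - g‖ := by gcongr
      _ < ‖c‖⁻¹ * ‖c‖ := by gcongr
      _ = 1 := inv_mul_cancel₀ (norm_ne_zero_iff.2 hc)

lemma IsClosedIdealOfA.subset_closedSpanChi {K : Set C₀(BoolCharSpace B, ℂ)}
    (hK : IsClosedIdealOfA K) : K ⊆ closedSpanChi {A : B | chi A ∈ K} := by
  classical
  intro f hf
  rw [closedSpanChi, Metric.mem_closure_iff]
  intro ε hε
  obtain ⟨g, hg, hfg⟩ := Metric.mem_closure_iff.1 (hK.1 hf) (ε / 2) (half_pos hε)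
  obtain ⟨ι, _, c, a, ha, rfl⟩ := isDisjointChiSum_of_mem_span hg
  let large (i : ι) : Prop := ε / 2 < ‖c i‖
  refine ⟨∑ i with large i, c i • chi (a i), Submodule.sum_mem _ fun i hi =>
    Submodule.smul_mem _ _ (Submodule.subset_span ⟨a i, ?_, rfl⟩), ?_⟩
  · exact hK.chi_mem_of_norm_sub_lt hf (chi_mul_sum_smul_chi ha c i)
      (by rw [← dist_eq_norm]; exact hfg.trans (Finset.mem_filter.1 hi).2)
  · have hsmall : ‖∑ i with ¬large i, c i • chi (a i)‖ ≤ ε / 2 :=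
      norm_sum_smul_chi_le ha (half_pos hε).le fun i hi => not_lt.1 (Finset.mem_filter.1 hi).2
    calc dist f (∑ i with large i, c i • chi (a i))
        ≤ dist f (∑ i, c i • chi (a i)) +
            dist (∑ i, c i • chi (a i)) (∑ i with large i, c i • chi (a i)) :=
          dist_triangle _ _ _
      _ < ε / 2 + ε / 2 := by
        refine add_lt_add_of_lt_of_le hfg ?_
        rwa [dist_eq_norm, ← Finset.sum_filter_add_sum_filter_not Finset.univ large,
          add_sub_cancel_left]
      _ = ε := add_halves ε

lemma IsClosedIdealOfA.closedSpanChi_setOf_chi_mem {K : Set C₀(BoolCharSpace B, ℂ)}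
    (hK : IsClosedIdealOfA K) : closedSpanChi {A : B | chi A ∈ K} = K := by
  refine subset_antisymm (closure_minimal ?_ hK.2.1) hK.subset_closedSpanChi
  exact Submodule.span_le (p := hK.toSubmodule).2 (Set.image_subset_iff.2 fun _ hA => hA)

lemma IsClosedIdealOfA.boolIdeal_setOf_chi_mem {K : Set C₀(BoolCharSpace B, ℂ)}
    (hK : IsClosedIdealOfA K) : BoolIdeal {A : B | chi A ∈ K} := by
  have hinf (a : B) (ha : chi a ∈ K) (b : B) : chi (a ⊓ b) ∈ K :=
    chi_mul a b ▸ (hK.2.2.2.2.2 _ ha _ (chi_mem_boolAlgebraOfChars b)).1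
  refine ⟨⟨⊥, by simpa using hK.2.2.1⟩, fun a ha b hb => ?_, hinf⟩
  rw [Set.mem_ofPred_eq, chi_sup]
  exact hK.toSubmodule.sub_mem (hK.toSubmodule.add_mem ha hb) (hinf a ha b)

/-- The map 𝓙 ↦ K_𝓙 = closed span{χ_A : A ∈ 𝓙} is a bijection between the
ideals of the Boolean algebra 𝓑 and the closed ideals of 𝓐(𝓑), with inverse
K ↦ 𝓙_K = {A ∈ 𝓑 : χ_A ∈ K}. -/
theorem ideal_bijection {B : Type*} [GeneralizedBooleanAlgebra B] :
    (∀ J : Set B, BoolIdeal J →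
      IsClosedIdealOfA (closure (Submodule.span ℂ (chi '' J) : Set C₀(BoolCharSpace B, ℂ))) ∧
      {A : B | chi A ∈ closure (Submodule.span ℂ (chi '' J)
        : Set C₀(BoolCharSpace B, ℂ))} = J) ∧
    (∀ K : Set C₀(BoolCharSpace B, ℂ), IsClosedIdealOfA K →
      BoolIdeal {A : B | chi A ∈ K} ∧
      closure (Submodule.span ℂ (chi '' {A : B | chi A ∈ K})
        : Set C₀(BoolCharSpace B, ℂ)) = K) :=
  ⟨fun _ hJ => ⟨hJ.isClosedIdealOfA_closedSpanChi, hJ.setOf_chi_mem_closedSpanChi⟩,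
    fun _ hK => ⟨hK.boolIdeal_setOf_chi_mem, hK.closedSpanChi_setOf_chi_mem⟩⟩
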